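/- With 𝒫 as in the block formula and ℒ : G_{2,4} → ℝ^{3×3} the linear map sending P to the matrix with entries ℒ(P)₁₁ = (P₁₁+P₂₂−P₃₃−P₄₄)/2, ℒ(P)₁₂ = P₂₃−P₁₄, ℒ(P)₁₃ = P₂₄+P₁₃, ℒ(P)₂₁ = P₂₃+P₁₄, ℒ(P)₂₂ = (P₁₁−P₂₂+P₃₃−P₄₄)/2, ℒ(P)₂₃ = P₃₄−P₁₂, ℒ(P)₃₁ = P₂₄−P₁₃, ℒ(P)₃₂ = P₃₄+P₁₂, ℒ(P)₃₃ = (P₁₁−P₂₂−P₃₃+P₄₄)/2, one has ℒ(𝒫(x,y)) = xyᵀ for all x, y ∈ S². -/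

import Mathlib

open Matrix

/-- The parametrization `𝒫 : S² × S² → ℝ^{4×4}` given in block form by
`𝒫(x,y) = (1/2)[[1 + xᵀy, -(x×y)ᵀ],[-(x×y), xyᵀ + yxᵀ + (1-xᵀy)I₃]]`. -/
noncomputable def Pmat (x y : Fin 3 → ℝ) : Matrix (Fin 4) (Fin 4) ℝ :=
  let d : ℝ := x 0 * y 0 + x 1 * y 1 + x 2 * y 2
  let c : Fin 3 → ℝ :=
    ![x 1 * y 2 - x 2 * y 1, x 2 * y 0 - x 0 * y 2, x 0 * y 1 - x 1 * y 0]
  (1 / 2 : ℝ) •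
    !![1 + d, -c 0, -c 1, -c 2;
       -c 0, x 0 * y 0 + y 0 * x 0 + (1 - d), x 0 * y 1 + y 0 * x 1, x 0 * y 2 + y 0 * x 2;
       -c 1, x 1 * y 0 + y 1 * x 0, x 1 * y 1 + y 1 * x 1 + (1 - d), x 1 * y 2 + y 1 * x 2;
       -c 2, x 2 * y 0 + y 2 * x 0, x 2 * y 1 + y 2 * x 1, x 2 * y 2 + y 2 * x 2 + (1 - d)]

/-- The outer product `xyᵀ ∈ ℝ^{3×3}`. -/
noncomputable def outer (x y : Fin 3 → ℝ) : Matrix (Fin 3) (Fin 3) ℝ :=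
  Matrix.of fun i j => x i * y j

/-- The linear map `ℒ : ℝ^{4×4} → ℝ^{3×3}` recovering the outer product from `𝒫`. -/
noncomputable def Lmap (P : Matrix (Fin 4) (Fin 4) ℝ) : Matrix (Fin 3) (Fin 3) ℝ :=
  !![(P 0 0 + P 1 1 - P 2 2 - P 3 3) / 2, P 1 2 - P 0 3, P 1 3 + P 0 2;
     P 1 2 + P 0 3, (P 0 0 - P 1 1 + P 2 2 - P 3 3) / 2, P 2 3 - P 0 1;
     P 1 3 - P 0 2, P 2 3 + P 0 1, (P 0 0 - P 1 1 - P 2 2 + P 3 3) / 2]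

theorem Lmap_Pmat_general (x y : Fin 3 → ℝ) :
    Lmap (Pmat x y) = outer x y := by
  ext i j
  fin_cases i <;> fin_cases j <;>
    simp only [Lmap, Pmat, outer, smul_of, smul_cons, smul_eq_mul, smul_empty, of_apply, cons_val',
      cons_val, cons_val_fin_one, Fin.isValue, Fin.mk_one, Fin.zero_eta, Fin.reduceFinMk] <;>
    ring

/-- `ℒ(𝒫(x,y)) = xyᵀ` for unit vectors `x, y ∈ S²`. -/
theorem Lmap_Pmat (x y : Fin 3 → ℝ)
    (hx : x 0 ^ 2 + x 1 ^ 2 + x 2 ^ 2 = 1) (hy : y 0 ^ 2 + y 1 ^ 2 + y 2 ^ 2 = 1) :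
    Lmap (Pmat x y) = outer x y :=
  Lmap_Pmat_general x y
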